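/- arXiv:1801.06704 — 4 statements merged into one kernel-verified Lean document; each statement's English description precedes it below -/
import Mathlib

section
/- Let a, b be integers with a, b ≥ 2, and let ε > 0 be a real number. Then there exist positive integers m, n such that |a^m − b^n| ≤ ε · b^n. -/
/-!
Dirichlet's theorem gives positive integers `m, n` with `m · log a / log b` within any prescribed
distance of `n`, i.e. `m log a - n log b` as small as we like. Exponentiating, `a ^ m / b ^ n` is then
as close to `1` as we like.
-/

open Real

theorem Real.exists_pos_nat_abs_mul_sub_le {ξ δ : ℝ} (hξ : 0 < ξ) (hδ : 0 < δ) :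
    ∃ k j : ℕ, 0 < k ∧ 0 < j ∧ |k * ξ - j| ≤ δ := by
  obtain ⟨N, hN⟩ := exists_nat_one_div_lt (lt_min hξ hδ)
  obtain ⟨j, k, hk, -, hkj⟩ := exists_int_int_abs_mul_sub_le ξ N.succ_pos
  have hkj : |k * ξ - j| < min ξ δ := by
    refine hkj.trans_lt (lt_of_le_of_lt ?_ hN)
    gcongr
    linarith
  -- `j ≤ 0` would force `|k ξ - j| ≥ k ξ ≥ ξ`.
  have hj : 0 < j := by
    by_contra! hj
    have hkξ : ξ ≤ k * ξ := le_mul_of_one_le_left hξ.le (by exact_mod_cast hk)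
    have : (j : ℝ) ≤ 0 := by exact_mod_cast hj
    linarith [le_abs_self (k * ξ - j), min_le_left ξ δ]
  lift k to ℕ using hk.le
  lift j to ℕ using hj.le
  exact ⟨k, j, by exact_mod_cast hk, by exact_mod_cast hj,
    by exact_mod_cast (hkj.trans_le (min_le_right ξ δ)).le⟩

theorem Real.abs_exp_sub_one_le_of_abs_le_log {t ε : ℝ} (hε : 0 ≤ ε) (ht : |t| ≤ log (1 + ε)) :
    |exp t - 1| ≤ ε := by
  have hlog : log (1 + ε) ≤ ε := by linarith [log_le_sub_one_of_pos (x := 1 + ε) (by linarith)]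
  rw [abs_le]
  constructor
  · linarith [add_one_le_exp t, neg_abs_le t]
  · have : exp t ≤ 1 + ε := by
      calc exp t ≤ exp (log (1 + ε)) := exp_le_exp.mpr ((le_abs_self t).trans ht)
        _ = 1 + ε := exp_log (by linarith)
    linarith

theorem Real.abs_sub_le_mul_of_abs_log_sub_le {x y ε : ℝ} (hx : 0 < x) (hy : 0 < y) (hε : 0 ≤ ε)
    (h : |log x - log y| ≤ log (1 + ε)) : |x - y| ≤ ε * y := by
  have hxy : x = y * exp (log x - log y) := by
    rw [exp_sub, exp_log hx, exp_log hy]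
    field_simp
  calc |x - y| = y * |exp (log x - log y) - 1| := by
        rw [hxy, ← mul_sub_one, abs_mul, abs_of_pos hy]
        simp only [← hxy]
    _ ≤ y * ε := by gcongr; exact abs_exp_sub_one_le_of_abs_le_log hε h
    _ = ε * y := mul_comm y ε

theorem base_approximation (a b : ℕ) (ha : 2 ≤ a) (hb : 2 ≤ b) (ε : ℝ) (hε : 0 < ε) :
    ∃ m n : ℕ, 0 < m ∧ 0 < n ∧ |(a : ℝ) ^ m - (b : ℝ) ^ n| ≤ ε * (b : ℝ) ^ n := by
  have hla : 0 < log a := log_pos (by exact_mod_cast ha)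
  have hlb : 0 < log b := log_pos (by exact_mod_cast hb)
  have hlε : 0 < log (1 + ε) := log_pos (by linarith)
  obtain ⟨m, n, hm, hn, hmn⟩ :=
    exists_pos_nat_abs_mul_sub_le (div_pos hla hlb) (div_pos hlε hlb)
  refine ⟨m, n, hm, hn, abs_sub_le_mul_of_abs_log_sub_le (by positivity) (by positivity) hε.le ?_⟩
  calc |log ((a : ℝ) ^ m) - log ((b : ℝ) ^ n)| = |m * (log a / log b) - n| * log b := by
        rw [log_pow, log_pow, ← abs_of_pos hlb, ← abs_mul, abs_of_pos hlb]
        congr 1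
        field_simp
    _ ≤ log (1 + ε) / log b * log b := by gcongr
    _ = log (1 + ε) := div_mul_cancel₀ _ hlb.ne'
end

section
/- Let f : ℕ → α be a sequence, p, q positive integers, and I, J ⊆ ℕ intervals. Suppose f has local period p on I (i.e., f(x) = f(x+p) whenever x, x+p ∈ I) and local period q on J. If the intersection I ∩ J contains at least p + q elements, then f has local period p on I ∪ J. -/
/-!
Since `I ∩ J` is an interval, it contains a window `[a, a + p + q)`. On `J`, the value `f x`
depends only on `x mod q`, so for `x, x + p ∈ J` we may replace `x` by the `y ≡ x` in
`[a, a + q)`; then `y, y + p` lie in the window, where `p`-periodicity is inherited from `I`.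
Hence `f` has local period `p` on `J` too, and on `I ∪ J`: the intervals share `p` consecutive
points, so `x` only in `I` and `x + p` only in `J` is impossible.
-/

open Set

def HasLocalPeriod {α : Type*} (f : ℕ → α) (p : ℕ) (I : Set ℕ) : Prop :=
  ∀ x, x ∈ I → x + p ∈ I → f x = f (x + p)

theorem Nat.exists_mem_Ico_modEq {q : ℕ} (hq : 0 < q) (a x : ℕ) :
    ∃ y ∈ Ico a (a + q), y ≡ x [MOD q] := by
  have hlt := Nat.mod_lt (x + (q - 1) * a) hq
  refine ⟨a + (x + (q - 1) * a) % q, ⟨Nat.le_add_right _ _, by omega⟩, ?_⟩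
  calc a + (x + (q - 1) * a) % q ≡ a + (x + (q - 1) * a) [MOD q] :=
        (Nat.mod_modEq _ _).add_left a
    _ = x + q * a := by
      obtain ⟨q, rfl⟩ := Nat.exists_eq_add_of_lt hq
      simp only [Nat.add_sub_cancel]
      ring
    _ ≡ x [MOD q] := Nat.add_mul_mod_self_left x q a

theorem Set.OrdConnected.exists_Ico_subset_of_le_card {S : Set ℕ} (hS : S.OrdConnected)
    {T : Finset ℕ} (hT : ↑T ⊆ S) {n : ℕ} (hn : n ≤ T.card) :
    ∃ a, Ico a (a + n) ⊆ S := by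
  rcases T.eq_empty_or_nonempty with rfl | hne
  · exact ⟨0, by simp_all⟩
  refine ⟨T.min' hne, fun y hy =>
    hS.out (hT (T.min'_mem hne)) (hT (T.max'_mem hne)) ⟨hy.1, ?_⟩⟩
  have hcard : T.card ≤ T.max' hne + 1 - T.min' hne := by
    simpa only [Nat.card_Icc] using Finset.card_le_card fun t ht =>
      Finset.mem_Icc.mpr ⟨T.min'_le t ht, T.le_max' t ht⟩
  have := T.min'_le _ (T.max'_mem hne)
  have := hy.2
  omega

theorem Set.OrdConnected.inter_subset_Ioo {β : Type*} [LinearOrder β] {I J : Set β}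
    (hI : I.OrdConnected) (hJ : J.OrdConnected) {x y : β} (hxy : x ≤ y) (hx : x ∈ I)
    (hy : y ∈ J) (hxJ : x ∉ J) (hyI : y ∉ I) : I ∩ J ⊆ Ioo x y := fun _ ⟨hcI, hcJ⟩ =>
  ⟨lt_of_not_ge fun hcx => hxJ (hJ.out hcJ hy ⟨hcx, hxy⟩),
    lt_of_not_ge fun hyc => hyI (hI.out hx hcI ⟨hxy, hyc⟩)⟩

theorem Set.OrdConnected.mem_or_mem_of_Ico_subset_inter {I J : Set ℕ} (hI : I.OrdConnected)
    (hJ : J.OrdConnected) {a n x : ℕ} (hsub : Ico a (a + n) ⊆ I ∩ J) (hx : x ∈ I)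
    (hxn : x + n ∈ J) : x ∈ J ∨ x + n ∈ I := by
  by_contra! ⟨hxJ, hxnI⟩
  rcases n.eq_zero_or_pos with rfl | hn
  · exact hxJ hxn
  have hIoo := hsub.trans (hI.inter_subset_Ioo hJ (Nat.le_add_right _ _) hx hxn hxJ hxnI)
  obtain ⟨hxa, -⟩ := hIoo (left_mem_Ico.mpr (by omega))
  obtain ⟨-, hlast⟩ := hIoo (show a + n - 1 ∈ Ico a (a + n) by constructor <;> omega)
  omega

namespace HasLocalPeriod

variable {α : Type*} {f : ℕ → α} {p q : ℕ} {I J : Set ℕ}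

theorem mono (h : HasLocalPeriod f p J) (hIJ : I ⊆ J) : HasLocalPeriod f p I :=
  fun x hx hxp => h x (hIJ hx) (hIJ hxp)

theorem apply_add_mul (hJ : J.OrdConnected) (h : HasLocalPeriod f q J) {x : ℕ} (hx : x ∈ J) :
    ∀ n, x + n * q ∈ J → f x = f (x + n * q)
  | 0, _ => by simp
  | n + 1, hxn => by
    rw [add_one_mul, ← add_assoc] at hxn ⊢
    have hmem : x + n * q ∈ J := hJ.out hx hxn ⟨Nat.le_add_right _ _, Nat.le_add_right _ _⟩
    rw [apply_add_mul hJ h hx n hmem, h _ hmem hxn]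

theorem apply_eq_of_modEq (hJ : J.OrdConnected) (h : HasLocalPeriod f q J) {x y : ℕ}
    (hx : x ∈ J) (hy : y ∈ J) (hxy : x ≡ y [MOD q]) : f x = f y := by
  wlog hle : x ≤ y generalizing x y
  · exact (this hy hx hxy.symm (le_of_not_ge hle)).symm
  obtain ⟨n, hn⟩ := (Nat.modEq_iff_dvd' hle).mp hxy
  obtain rfl : y = x + n * q := by rw [mul_comm, ← hn]; omega
  exact h.apply_add_mul hJ hx n hy

theorem of_Ico_subset (hJ : J.OrdConnected) (hq : 0 < q) (hfq : HasLocalPeriod f q J) {a : ℕ}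
    (hsub : Ico a (a + (p + q)) ⊆ J) (hfp : HasLocalPeriod f p (Ico a (a + (p + q)))) :
    HasLocalPeriod f p J := by
  intro x hx hxp
  obtain ⟨y, hy, hyx⟩ := Nat.exists_mem_Ico_modEq hq a x
  have hyW : y ∈ Ico a (a + (p + q)) := ⟨hy.1, by have := hy.2; omega⟩
  have hypW : y + p ∈ Ico a (a + (p + q)) := ⟨by have := hy.1; omega, by have := hy.2; omega⟩
  calc f x = f y := hfq.apply_eq_of_modEq hJ hx (hsub hyW) hyx.symm
    _ = f (y + p) := hfp y hyW hypW
    _ = f (x + p) := hfq.apply_eq_of_modEq hJ (hsub hypW) hxp (hyx.add_right p)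

theorem union (hI : I.OrdConnected) (hJ : J.OrdConnected) (hfI : HasLocalPeriod f p I)
    (hfJ : HasLocalPeriod f p J) {a : ℕ} (hsub : Ico a (a + p) ⊆ I ∩ J) :
    HasLocalPeriod f p (I ∪ J) := by
  rintro x (hxI | hxJ) (hxpI | hxpJ)
  · exact hfI x hxI hxpI
  · rcases hI.mem_or_mem_of_Ico_subset_inter hJ hsub hxI hxpJ with hxJ | hxpI
    exacts [hfJ x hxJ hxpJ, hfI x hxI hxpI]
  · rcases hJ.mem_or_mem_of_Ico_subset_inter hI (by rwa [inter_comm]) hxJ hxpI with hxI | hxpJ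
    exacts [hfI x hxI hxpI, hfJ x hxJ hxpJ]
  · exact hfJ x hxJ hxpJ

end HasLocalPeriod

theorem overlapping_local_period_general {α : Type*} (f : ℕ → α) (p q : ℕ) (hq : 0 < q)
    (I J : Set ℕ) (hI : I.OrdConnected) (hJ : J.OrdConnected)
    (hfI : ∀ x, x ∈ I → x + p ∈ I → f x = f (x + p))
    (hfJ : ∀ x, x ∈ J → x + q ∈ J → f x = f (x + q))
    (hcard : ∃ T : Finset ℕ, ↑T ⊆ I ∩ J ∧ p + q ≤ T.card) :
    ∀ x, x ∈ I ∪ J → x + p ∈ I ∪ J → f x = f (x + p) := by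
  obtain ⟨T, hT, hTcard⟩ := hcard
  obtain ⟨a, hsub⟩ := (hI.inter hJ).exists_Ico_subset_of_le_card hT hTcard
  have hpI : HasLocalPeriod f p I := hfI
  have hpJ : HasLocalPeriod f p J :=
    HasLocalPeriod.of_Ico_subset hJ hq hfJ (hsub.trans inter_subset_right)
      (hpI.mono (hsub.trans inter_subset_left))
  exact hpI.union hI hJ hpJ ((Ico_subset_Ico_right (by omega)).trans hsub)

theorem overlapping_local_period {α : Type*} (f : ℕ → α) (p q : ℕ) (hp : 0 < p) (hq : 0 < q)
    (I J : Set ℕ) (hI : I.OrdConnected) (hJ : J.OrdConnected)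
    (hfI : ∀ x, x ∈ I → x + p ∈ I → f x = f (x + p))
    (hfJ : ∀ x, x ∈ J → x + q ∈ J → f x = f (x + q))
    (hcard : ∃ T : Finset ℕ, ↑T ⊆ I ∩ J ∧ p + q ≤ T.card) :
    ∀ x, x ∈ I ∪ J → x + p ∈ I ∪ J → f x = f (x + p) :=
  overlapping_local_period_general f p q hq I J hI hJ hfI hfJ hcard
end

section
/- Let f : ℕ → α and suppose there exist x ∈ ℕ, a positive integer n, and for each y ≥ x a positive integer p_y ≤ b^n/6 (for a fixed integer b ≥ 2) such that f has local period p_y on the interval I_y = {z ∈ ℕ : |z − (y·b^n + b^n)| ≤ (2/3)·b^n}. Then f has local period p_x on the union ⋃_{y ≥ x} I_y; in particular, f is ultimately periodic. -/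
/-!
Take `c = b ^ n`, so that `I_y` is the set of naturals in `[(y + 1/3) c, (y + 5/3) c]`.
Consecutive windows overlap in an interval of length `c / 3 ≥ p_x + p_{y+1}`, and this is enough
to transport the period `p_x` across the overlap: a point `z` whose shift `z + p_x` leaves the
window reached so far is moved down by multiples of `p_{y+1}` (which changes neither `f z` nor
`f (z + p_x)`) until the pair lies inside it. By induction `p_x` is a local period on
`[(x + 1/3) c, (y + 5/3) c]` for every `y ≥ x`, hence on the whole half-line.
-/

open Set

section LocalPeriod

variable {α : Type*}

def HasLocalPeriodOn (f : ℕ → α) (p : ℕ) (s : Set ℕ) : Prop :=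
  ∀ z ∈ s, z + p ∈ s → f z = f (z + p)

theorem HasLocalPeriodOn.mono {f : ℕ → α} {p : ℕ} {s t : Set ℕ} (h : HasLocalPeriodOn f p t)
    (hst : s ⊆ t) : HasLocalPeriodOn f p s :=
  fun z hz hzp => h z (hst hz) (hst hzp)

theorem hasLocalPeriodOn_preimage_Icc_iff {f : ℕ → α} {p : ℕ} {A D : ℝ} :
    HasLocalPeriodOn f p (Nat.cast ⁻¹' Icc A D) ↔
      ∀ z : ℕ, A ≤ z → (z + p : ℝ) ≤ D → f z = f (z + p) := by
  simp only [HasLocalPeriodOn, mem_preimage, mem_Icc, Nat.cast_add]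
  have := Nat.cast_nonneg (α := ℝ) p
  exact ⟨fun h z hA hD => h z ⟨hA, by linarith⟩ ⟨by linarith, hD⟩,
    fun h z hz hzp => h z hz.1 hzp.2⟩

theorem HasLocalPeriodOn.glue {f : ℕ → α} {p q : ℕ} {A A' D E : ℝ}
    (hp : HasLocalPeriodOn f p (Nat.cast ⁻¹' Icc A D))
    (hq : HasLocalPeriodOn f q (Nat.cast ⁻¹' Icc A' E))
    (hq0 : 0 < q) (hAA' : A ≤ A') (hA' : 0 ≤ A') (hoverlap : (p + q : ℝ) ≤ D - A') :
    HasLocalPeriodOn f p (Nat.cast ⁻¹' Icc A E) := by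
  rw [hasLocalPeriodOn_preimage_Icc_iff] at *
  intro z
  induction z using Nat.strong_induction_on with
  | _ z ih =>
    intro hzA hzpE
    by_cases hzD : (z + p : ℝ) ≤ D
    · exact hp z hzA hzD
    have hqz : q ≤ z := by exact_mod_cast (show (q : ℝ) ≤ z by linarith)
    obtain ⟨w, rfl⟩ : ∃ w, z = w + q := ⟨z - q, by omega⟩
    push_cast at *
    calc f (w + q) = f w := (hq w (by linarith) (by linarith)).symm
      _ = f (w + p) := ih w (by omega) (by linarith) (by linarith)
      _ = f (w + p + q) := hq (w + p) (by push_cast; linarith) (by push_cast; linarith)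
      _ = f (w + q + p) := by rw [add_right_comm]

def window (c : ℝ) (y : ℕ) : Set ℕ :=
  {w : ℕ | |(w : ℝ) - ((y : ℝ) * c + c)| ≤ 2 / 3 * c}

theorem window_eq_preimage_Icc (c : ℝ) (y : ℕ) :
    window c y = Nat.cast ⁻¹' Icc ((y + 1 / 3) * c) ((y + 5 / 3) * c) := by
  ext w
  simp only [window, mem_ofPred_eq, mem_preimage, mem_Icc, abs_le]
  constructor <;> rintro ⟨h₁, h₂⟩ <;> constructor <;> linarith

theorem biUnion_window_subset (c : ℝ) (x : ℕ) :
    ⋃ y ∈ Ici x, window c y ⊆ Nat.cast ⁻¹' Ici ((x + 1 / 3) * c) := by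
  simp only [iUnion_subset_iff, mem_Ici, window_eq_preimage_Icc]
  intro y hy w hw
  have : (x : ℝ) ≤ y := by exact_mod_cast hy
  simp only [mem_preimage, mem_Icc, mem_Ici] at hw ⊢
  -- a nonempty window forces `0 ≤ c`
  nlinarith [hw.1]

section Windows

variable {f : ℕ → α} {c : ℝ} {x : ℕ} {p : ℕ → ℕ}

theorem hasLocalPeriodOn_Icc_of_window (hpos : ∀ y, x ≤ y → 0 < p y)
    (hsmall : ∀ y, x ≤ y → (p y : ℝ) ≤ c / 6)
    (hloc : ∀ y, x ≤ y → HasLocalPeriodOn f (p y) (window c y)) {y : ℕ} (hy : x ≤ y) :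
    HasLocalPeriodOn f (p x) (Nat.cast ⁻¹' Icc ((x + 1 / 3) * c) ((y + 5 / 3) * c)) := by
  simp only [window_eq_preimage_Icc] at hloc
  have hc : 0 ≤ c := by linarith [hsmall x le_rfl, (Nat.cast_nonneg (p x) : (0 : ℝ) ≤ _)]
  induction y, hy using Nat.le_induction with
  | base => exact hloc x le_rfl
  | succ y hy ih =>
    have hxy : (x : ℝ) ≤ y := by exact_mod_cast hy
    refine ih.glue (hloc (y + 1) (by omega)) (hpos (y + 1) (by omega)) ?_ ?_ ?_ <;> push_cast
    · nlinarith
    · positivity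
    · linarith [hsmall x le_rfl, hsmall (y + 1) (by omega)]

theorem hasLocalPeriodOn_Ici_of_window (hpos : ∀ y, x ≤ y → 0 < p y)
    (hsmall : ∀ y, x ≤ y → (p y : ℝ) ≤ c / 6)
    (hloc : ∀ y, x ≤ y → HasLocalPeriodOn f (p y) (window c y)) :
    HasLocalPeriodOn f (p x) (Nat.cast ⁻¹' Ici ((x + 1 / 3) * c)) := by
  have hc : 0 < c := by linarith [hsmall x le_rfl, (Nat.cast_pos.2 (hpos x le_rfl) : (0 : ℝ) < _)]
  intro z hz hzp
  obtain ⟨y, hy⟩ := exists_nat_ge (((z + p x : ℕ) : ℝ) / c)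
  have hzp_le : ((z + p x : ℕ) : ℝ) ≤ (max x y + 5 / 3) * c := by
    rw [div_le_iff₀ hc] at hy
    have : (y : ℝ) ≤ max x y := by exact_mod_cast le_max_right x y
    nlinarith
  refine hasLocalPeriodOn_Icc_of_window hpos hsmall hloc (le_max_left x y) z
    ⟨hz, ?_⟩ ⟨hzp, hzp_le⟩
  push_cast at hzp_le ⊢
  linarith [(Nat.cast_nonneg (p x) : (0 : ℝ) ≤ _)]

end Windows

end LocalPeriod

theorem glue_local_periods_ultimately_periodic_general {α : Type*} (f : ℕ → α)
    (b : ℕ) (n : ℕ) (x : ℕ) (p : ℕ → ℕ)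
    (hppos : ∀ y, x ≤ y → 0 < p y)
    (hpsmall : ∀ y, x ≤ y → (p y : ℝ) ≤ (b : ℝ) ^ n / 6)
    (hloc : ∀ y, x ≤ y → ∀ z : ℕ,
      |(z : ℝ) - ((y : ℝ) * (b : ℝ) ^ n + (b : ℝ) ^ n)| ≤ 2 / 3 * (b : ℝ) ^ n →
      |((z + p y : ℕ) : ℝ) - ((y : ℝ) * (b : ℝ) ^ n + (b : ℝ) ^ n)| ≤ 2 / 3 * (b : ℝ) ^ n →
      f z = f (z + p y)) :
    (∀ z : ℕ,
      (z ∈ ⋃ y ∈ Set.Ici x, {w : ℕ | |(w : ℝ) - ((y : ℝ) * (b : ℝ) ^ n + (b : ℝ) ^ n)| ≤ 2 / 3 * (b : ℝ) ^ n}) →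
      (z + p x ∈ ⋃ y ∈ Set.Ici x, {w : ℕ | |(w : ℝ) - ((y : ℝ) * (b : ℝ) ^ n + (b : ℝ) ^ n)| ≤ 2 / 3 * (b : ℝ) ^ n}) →
      f z = f (z + p x)) ∧
    ∃ N : ℕ, ∃ P : ℕ, 0 < P ∧ ∀ z, N ≤ z → f z = f (z + P) := by
  have h := hasLocalPeriodOn_Ici_of_window hppos hpsmall hloc
  refine ⟨h.mono (biUnion_window_subset _ x), ⌈(x + 1 / 3) * (b : ℝ) ^ n⌉₊, p x,
    hppos x le_rfl, fun z hz => h z ?_ ?_⟩ <;>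
  · simp only [mem_preimage, mem_Ici, ← Nat.ceil_le]
    omega

theorem glue_local_periods_ultimately_periodic {α : Type*} (f : ℕ → α)
    (b : ℕ) (hb : 2 ≤ b) (n : ℕ) (hn : 1 ≤ n) (x : ℕ) (p : ℕ → ℕ)
    (hppos : ∀ y, x ≤ y → 0 < p y)
    (hpsmall : ∀ y, x ≤ y → (p y : ℝ) ≤ (b : ℝ) ^ n / 6)
    (hloc : ∀ y, x ≤ y → ∀ z : ℕ,
      |(z : ℝ) - ((y : ℝ) * (b : ℝ) ^ n + (b : ℝ) ^ n)| ≤ 2 / 3 * (b : ℝ) ^ n →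
      |((z + p y : ℕ) : ℝ) - ((y : ℝ) * (b : ℝ) ^ n + (b : ℝ) ^ n)| ≤ 2 / 3 * (b : ℝ) ^ n →
      f z = f (z + p y)) :
    (∀ z : ℕ,
      (z ∈ ⋃ y ∈ Set.Ici x, {w : ℕ | |(w : ℝ) - ((y : ℝ) * (b : ℝ) ^ n + (b : ℝ) ^ n)| ≤ 2 / 3 * (b : ℝ) ^ n}) →
      (z + p x ∈ ⋃ y ∈ Set.Ici x, {w : ℕ | |(w : ℝ) - ((y : ℝ) * (b : ℝ) ^ n + (b : ℝ) ^ n)| ≤ 2 / 3 * (b : ℝ) ^ n}) →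
      f z = f (z + p x)) ∧
    ∃ N : ℕ, ∃ P : ℕ, 0 < P ∧ ∀ z, N ≤ z → f z = f (z + P) :=
  glue_local_periods_ultimately_periodic_general f b n x p hppos hpsmall hloc
end

section
/- Let a, b ≥ 2 be multiplicatively independent integers and let ξ ≥ 1 be a natural number. Then there exist positive integers m, n such that 0 < ξ·|a^m − b^n| ≤ b^n/6 and (5/6)·b^n ≤ a^m ≤ (7/6)·b^n. -/
/-!
Dirichlet's approximation theorem applied to `log a / log b` yields positive `m, n` with
`|m log a - n log b|` as small as we like, so `a ^ m / b ^ n` is within `1 / (6ξ)` of `1`;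
multiplicative independence makes `a ^ m - b ^ n` nonzero.
-/

open Real

/-- Once `1 / (N + 1) < α`, the integer that Dirichlet's theorem gives close to `k * α` is
positive. -/
theorem exists_pos_nat_abs_mul_sub_lt {α η : ℝ} (hα : 0 < α) (hη : 0 < η) :
    ∃ m n : ℕ, 0 < m ∧ 0 < n ∧ |m * α - n| < η := by
  obtain ⟨N, hN⟩ := exists_nat_one_div_lt (lt_min hη hα)
  obtain ⟨j, k, hk, -, hjk⟩ := Real.exists_int_int_abs_mul_sub_le α N.succ_pos
  have hclose : |k * α - j| < min η α :=
    calc |k * α - j| ≤ 1 / ((N.succ : ℝ) + 1) := hjk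
      _ ≤ 1 / ((N : ℝ) + 1) := by gcongr; simp
      _ < min η α := hN
  have hk1 : (1 : ℝ) ≤ k := by exact_mod_cast hk
  have hj : 0 < j := by
    have : α ≤ k * α := le_mul_of_one_le_left hα.le hk1
    have : k * α - j < α := (le_abs_self _).trans_lt (hclose.trans_le (min_le_right _ _))
    exact_mod_cast (by linarith : (0 : ℝ) < j)
  lift k to ℕ using hk.le
  lift j to ℕ using hj.le
  exact ⟨k, j, by omega, by omega, mod_cast hclose.trans_le (min_le_left _ _)⟩

theorem exists_pos_nat_abs_mul_sub_mul_lt {α β η : ℝ} (hα : 0 < α) (hβ : 0 < β) (hη : 0 < η) :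
    ∃ m n : ℕ, 0 < m ∧ 0 < n ∧ |m * α - n * β| < η := by
  obtain ⟨m, n, hm, hn, h⟩ := exists_pos_nat_abs_mul_sub_lt (div_pos hα hβ) (div_pos hη hβ)
  refine ⟨m, n, hm, hn, ?_⟩
  have hrescale : m * (α / β) - n = (m * α - n * β) / β := by field_simp
  rwa [hrescale, abs_div, abs_of_pos hβ, div_lt_div_iff_of_pos_right hβ] at h

theorem abs_exp_sub_exp_le {x y : ℝ} (h : |x - y| ≤ 1) :
    |exp x - exp y| ≤ 2 * |x - y| * exp y := by
  have hsplit : exp x - exp y = exp y * (exp (x - y) - 1) := by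
    rw [mul_sub, ← exp_add, add_sub_cancel, mul_one]
  rw [hsplit, abs_mul, abs_of_pos (exp_pos y), mul_comm]
  gcongr
  exact abs_exp_sub_one_le h

theorem exists_abs_pow_sub_pow_le {a b : ℕ} (ha : 1 < a) (hb : 1 < b) {ε : ℝ} (hε : 0 < ε) :
    ∃ m n : ℕ, 0 < m ∧ 0 < n ∧ |(a : ℝ) ^ m - (b : ℝ) ^ n| ≤ ε * (b : ℝ) ^ n := by
  have hlog (c : ℕ) (hc : 1 < c) : 0 < log c := log_pos (by exact_mod_cast hc)
  have hpow (c k : ℕ) (hc : 1 < c) : (c : ℝ) ^ k = exp (k * log c) := by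
    rw [← log_pow, exp_log (by positivity)]
  obtain ⟨m, n, hm, hn, hmn⟩ :=
    exists_pos_nat_abs_mul_sub_mul_lt (hlog a ha) (hlog b hb) (lt_min one_pos (half_pos hε))
  refine ⟨m, n, hm, hn, ?_⟩
  rw [hpow a m ha, hpow b n hb]
  calc |exp (m * log a) - exp (n * log b)| ≤ 2 * |m * log a - n * log b| * exp (n * log b) :=
        abs_exp_sub_exp_le (hmn.le.trans (min_le_left _ _))
    _ ≤ 2 * (ε / 2) * exp (n * log b) := by gcongr; exact hmn.le.trans (min_le_right _ _)
    _ = ε * exp (n * log b) := by ring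

theorem quantitative_approximation (a b : ℕ) (ha : 2 ≤ a) (hb : 2 ≤ b)
    (hindep : ∀ m n : ℕ, 0 < m → 0 < n → a ^ m ≠ b ^ n)
    (ξ : ℕ) (hξ : 1 ≤ ξ) :
    ∃ m n : ℕ, 0 < m ∧ 0 < n ∧
      0 < (ξ : ℝ) * |(a : ℝ) ^ m - (b : ℝ) ^ n| ∧
      (ξ : ℝ) * |(a : ℝ) ^ m - (b : ℝ) ^ n| ≤ (b : ℝ) ^ n / 6 ∧
      5 / 6 * (b : ℝ) ^ n ≤ (a : ℝ) ^ m ∧ (a : ℝ) ^ m ≤ 7 / 6 * (b : ℝ) ^ n := by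
  have hξ1 : (1 : ℝ) ≤ ξ := by exact_mod_cast hξ
  obtain ⟨m, n, hm, hn, hclose⟩ :=
    exists_abs_pow_sub_pow_le ha hb (ε := 1 / (6 * ξ)) (by positivity)
  have hne : (a : ℝ) ^ m - (b : ℝ) ^ n ≠ 0 :=
    sub_ne_zero.2 (by exact_mod_cast hindep m n hm hn)
  have hscaled : (ξ : ℝ) * |(a : ℝ) ^ m - (b : ℝ) ^ n| ≤ (b : ℝ) ^ n / 6 :=
    calc (ξ : ℝ) * |(a : ℝ) ^ m - (b : ℝ) ^ n| ≤ ξ * (1 / (6 * ξ) * (b : ℝ) ^ n) := by gcongr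
      _ = (b : ℝ) ^ n / 6 := by field_simp
  have hdiff : |(a : ℝ) ^ m - (b : ℝ) ^ n| ≤ (b : ℝ) ^ n / 6 :=
    (le_mul_of_one_le_left (abs_nonneg _) hξ1).trans hscaled
  obtain ⟨hlow, hhigh⟩ := abs_le.1 hdiff
  exact ⟨m, n, hm, hn, by positivity, hscaled, by linarith, by linarith⟩
end
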